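/- arXiv:1504.01904 — 5 statements merged into one kernel-verified Lean document; each statement's English description precedes it below -/
import Mathlib

section
/- Fix an integer m ≥ 2, set N = m+1 and h = 1/N, and let ε > 0 and b₀ > 0 be reals. Let A be the m² × m² symmetric positive definite matrix defined by A(r,r) = 4ε² + h²b₀ for all r, A(r,c) = −ε² if |r−c| = m or if (|r−c| = 1 and ⌈r/m⌉ = ⌈c/m⌉), and A(r,c) = 0 otherwise, and let L be its Cholesky factor. Then the number of pairs (r,c) with 1 ≤ c ≤ r ≤ m² and L(r,c) ≠ 0 is exactly m³ + m − 1. -/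
/-
The off-diagonal entries of the 5-point matrix `A` are `≤ 0`. Reading `A = L Lᵀ` column by column,
`L r c * L c c = A r c - ∑_{k < c} L r k * L c k`, so by induction on `c` the off-diagonal entries
of `L` are `≤ 0` too, every product `L r k * L c k` is `≥ 0`, and no cancellation can occur:
`L r c ≠ 0` iff `A r c ≠ 0` or `L r k ≠ 0 ≠ L c k` for some `k < c`. The solution of this symbolic
recurrence is the full band `r - m ≤ c ≤ r`, except in the first `m` rows, where `L` stays
bidiagonal; this gives `2m - 1` entries in the first `m` rows and `m + 1` in each of the other
`m² - m` rows.
-/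

/-- The m² × m² symmetrized 5-point finite-difference matrix for
−ε²Δu + b₀u on a uniform mesh of width h = 1/(m+1) on the unit square.
Rows/columns r,c : Fin (m^2) encode the 1-based indices r+1, c+1;
the condition ⌈(r+1)/m⌉ = ⌈(c+1)/m⌉ is equivalent to r/m = c/m (Nat division). -/
noncomputable def fdMatrix (m : ℕ) (ε b₀ : ℝ) :
    Matrix (Fin (m ^ 2)) (Fin (m ^ 2)) ℝ := fun r c =>
  if r = c then 4 * ε ^ 2 + (1 / (m + 1) : ℝ) ^ 2 * b₀
  else if (r : ℕ) + m = (c : ℕ) ∨ (c : ℕ) + m = (r : ℕ) then -ε ^ 2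
  else if ((r : ℕ) + 1 = (c : ℕ) ∨ (c : ℕ) + 1 = (r : ℕ))
      ∧ (r : ℕ) / m = (c : ℕ) / m then -ε ^ 2
  else 0

open Finset
open scoped Matrix

section LowerTriangular

variable {ι R : Type*} [Fintype ι] [LinearOrder ι]

theorem Matrix.mul_transpose_apply_of_lowerTriangular [NonUnitalNonAssocSemiring R] {L : Matrix ι ι R}
    (hL : ∀ i j, i < j → L i j = 0) (r c : ι) :
    (L * Lᵀ) r c = ∑ k with k < c, L r k * L c k + L r c * L c c := by
  have h_upper : ∑ k with ¬k ≤ c, L r k * L c k = 0 :=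
    sum_eq_zero fun k hk => by rw [hL c k (not_le.mp (mem_filter.mp hk).2), mul_zero]
  have h_le : univ.filter (· ≤ c) = insert c (univ.filter (· < c)) := by
    ext k; simp [le_iff_eq_or_lt]
  simp only [Matrix.mul_apply, Matrix.transpose_apply]
  rw [← sum_filter_add_sum_filter_not univ (· ≤ c), h_upper, add_zero, h_le,
    sum_insert (by simp), add_comm]

variable [CommRing R] [LinearOrder R] [IsStrictOrderedRing R] {L : Matrix ι ι R}

theorem Matrix.nonpos_of_lowerTriangular_of_mul_transpose_nonpos
    (hL : ∀ i j, i < j → L i j = 0) (hdiag : ∀ i, 0 < L i i)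
    (hA : ∀ i j, j < i → (L * Lᵀ) i j ≤ 0) {r c : ι} (hcr : c < r) : L r c ≤ 0 := by
  induction c using WellFoundedLT.induction generalizing r with
  | _ c ih =>
    have h_sum : 0 ≤ ∑ k with k < c, L r k * L c k :=
      sum_nonneg fun k hk => by
        have hkc := (mem_filter.mp hk).2
        exact mul_nonneg_of_nonpos_of_nonpos (ih k hkc (hkc.trans hcr)) (ih k hkc hkc)
    have h := hA r c hcr
    rw [Matrix.mul_transpose_apply_of_lowerTriangular hL] at h
    exact nonpos_of_mul_nonpos_left (by linarith) (hdiag c)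

theorem Matrix.ne_zero_iff_of_lowerTriangular_of_mul_transpose_nonpos
    (hL : ∀ i j, i < j → L i j = 0) (hdiag : ∀ i, 0 < L i i)
    (hA : ∀ i j, j < i → (L * Lᵀ) i j ≤ 0) {r c : ι} (hcr : c < r) :
    L r c ≠ 0 ↔ (L * Lᵀ) r c ≠ 0 ∨ ∃ k < c, L r k ≠ 0 ∧ L c k ≠ 0 := by
  have h_nonneg : ∀ k ∈ univ.filter (· < c), 0 ≤ L r k * L c k := fun k hk => by
    have hkc := (mem_filter.mp hk).2
    exact mul_nonneg_of_nonpos_of_nonpos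
      (Matrix.nonpos_of_lowerTriangular_of_mul_transpose_nonpos hL hdiag hA (hkc.trans hcr))
      (Matrix.nonpos_of_lowerTriangular_of_mul_transpose_nonpos hL hdiag hA hkc)
  have h_sum_ne_zero :
      ∑ k with k < c, L r k * L c k ≠ 0 ↔ ∃ k < c, L r k ≠ 0 ∧ L c k ≠ 0 := by
    simp [sum_eq_zero_iff_of_nonneg h_nonneg]
  have h_sum := sum_nonneg h_nonneg
  have h_entry := hA r c hcr
  have h_eq := Matrix.mul_transpose_apply_of_lowerTriangular hL r c
  rw [← h_sum_ne_zero, ← mul_ne_zero_iff_left (hdiag c).ne']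
  constructor
  · intro h
    by_contra! h'
    exact h (by linarith [h'.1, h'.2])
  · rintro (h | h) h0 <;> apply h <;> linarith

end LowerTriangular

theorem ncard_setOf_fin_prod_eq_sum (P : ℕ → ℕ → Prop) [∀ r c, Decidable (P r c)] (n : ℕ) :
    {p : Fin n × Fin n | P p.1 p.2}.ncard = ∑ r ∈ range n, #{c ∈ range n | P r c} := by
  rw [Set.ncard_eq_toFinset_card', Set.toFinset_ofPred, card_filter, Fintype.sum_prod_type]
  simp only [card_filter]
  rw [← Fin.sum_univ_eq_sum_range]
  simp only [← Fin.sum_univ_eq_sum_range (fun c => if P _ c then 1 else 0)]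

def fdCholeskyPattern (m r c : ℕ) : Prop := c ≤ r ∧ r ≤ c + m ∧ (m ≤ r ∨ r ≤ c + 1)

instance (m r c : ℕ) : Decidable (fdCholeskyPattern m r c) := by
  unfold fdCholeskyPattern; infer_instance

theorem fdCholeskyPattern_iff_of_lt {m r c : ℕ} (hm : 0 < m) (hcr : c < r) :
    fdCholeskyPattern m r c ↔ (c + m = r ∨ (c + 1 = r ∧ r / m = c / m)) ∨
      ∃ k < c, fdCholeskyPattern m r k ∧ fdCholeskyPattern m c k := by
  unfold fdCholeskyPattern
  constructor
  · rintro ⟨-, h_band, h_row⟩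
    by_cases h_entry : c + m = r ∨ (c + 1 = r ∧ r / m = c / m)
    · exact .inl h_entry
    have hmr : m ≤ r := by
      by_contra! hrm
      exact h_entry (.inr ⟨by omega, by rw [Nat.div_eq_of_lt hrm, Nat.div_eq_of_lt (by omega)]⟩)
    have hcm : c + m ≠ r := fun h => h_entry (.inl h)
    -- a fill-in entry `(r, c)` comes from `k = c - 1`
    refine .inr ⟨c - 1, ?_, ?_, ?_⟩ <;> omega
  · rintro ((h | ⟨h, -⟩) | ⟨k, hkc, ⟨-, hrk, hr⟩, -⟩) <;> omega

theorem card_filter_fdCholeskyPattern {m n r : ℕ} (hr : r < n) :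
    #{c ∈ range n | fdCholeskyPattern m r c} = (if m ≤ r then m else min r 1) + 1 := by
  have : {c ∈ range n | fdCholeskyPattern m r c} = Icc (r - if m ≤ r then m else min r 1) r := by
    ext c
    rw [mem_filter, mem_range, mem_Icc, fdCholeskyPattern]
    split_ifs <;> omega
  rw [this, Nat.card_Icc]
  split_ifs <;> omega

theorem sum_fdCholeskyPattern_row_card (m : ℕ) :
    ∑ r ∈ range (m ^ 2), ((if m ≤ r then m else min r 1) + 1) = m ^ 3 + m - 1 := by
  obtain _ | m := m
  · simp
  have h_le : m + 1 ≤ (m + 1) ^ 2 := Nat.le_self_pow two_ne_zero _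
  have h_first : ∑ r ∈ range (m + 1), ((if m + 1 ≤ r then m + 1 else min r 1) + 1) =
      2 * m + 1 := by
    rw [sum_congr rfl fun r hr => by rw [if_neg (not_le.mpr (mem_range.mp hr))], sum_range_succ']
    simp [mul_comm]
  have h_rest : ∑ r ∈ Ico (m + 1) ((m + 1) ^ 2), ((if m + 1 ≤ r then m + 1 else min r 1) + 1) =
      ((m + 1) ^ 2 - (m + 1)) * (m + 2) := by
    rw [sum_congr rfl fun r hr => by rw [if_pos (mem_Ico.mp hr).1], sum_const, Nat.card_Ico,
      smul_eq_mul]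
  rw [← sum_range_add_sum_Ico _ h_le, h_first, h_rest, Nat.add_succ_sub_one]
  zify [h_le]
  ring

theorem ncard_fdCholeskyPattern (m : ℕ) :
    {p : Fin (m ^ 2) × Fin (m ^ 2) | fdCholeskyPattern m p.1 p.2}.ncard = m ^ 3 + m - 1 := by
  rw [ncard_setOf_fin_prod_eq_sum, ← sum_fdCholeskyPattern_row_card]
  exact sum_congr rfl fun r hr => card_filter_fdCholeskyPattern (mem_range.mp hr)

section FiniteDifference

variable {m : ℕ} {ε b₀ : ℝ}

theorem fdMatrix_apply_of_lt {r c : Fin (m ^ 2)} (hcr : c < r) :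
    fdMatrix m ε b₀ r c =
      if (c : ℕ) + m = r ∨ ((c : ℕ) + 1 = r ∧ (r : ℕ) / m = c / m) then -ε ^ 2 else 0 := by
  have hcr' : (c : ℕ) < r := hcr
  simp only [fdMatrix, if_neg hcr.ne']
  split_ifs <;> first | rfl | omega

theorem fdMatrix_nonpos_of_lt {r c : Fin (m ^ 2)} (hcr : c < r) : fdMatrix m ε b₀ r c ≤ 0 := by
  rw [fdMatrix_apply_of_lt hcr]
  split_ifs <;> nlinarith

theorem fdMatrix_ne_zero_iff_of_lt (hε : ε ≠ 0) {r c : Fin (m ^ 2)} (hcr : c < r) :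
    fdMatrix m ε b₀ r c ≠ 0 ↔ (c : ℕ) + m = r ∨ ((c : ℕ) + 1 = r ∧ (r : ℕ) / m = c / m) := by
  rw [fdMatrix_apply_of_lt hcr, ite_ne_right_iff]
  simp [hε]

theorem fdMatrix_cholesky_ne_zero_iff (hε : ε ≠ 0) {L : Matrix (Fin (m ^ 2)) (Fin (m ^ 2)) ℝ}
    (hL : ∀ i j, i < j → L i j = 0) (hdiag : ∀ i, 0 < L i i) (hfac : fdMatrix m ε b₀ = L * Lᵀ)
    {r c : Fin (m ^ 2)} (hcr : c < r) : L r c ≠ 0 ↔ fdCholeskyPattern m r c := by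
  have hm : 0 < m := Nat.pos_of_ne_zero <| by rintro rfl; exact r.elim0
  have hA : ∀ i j, j < i → (L * Lᵀ) i j ≤ 0 := fun i j hji => hfac ▸ fdMatrix_nonpos_of_lt hji
  induction c using WellFoundedLT.induction generalizing r with
  | _ c ih =>
    rw [Matrix.ne_zero_iff_of_lowerTriangular_of_mul_transpose_nonpos hL hdiag hA hcr, ← hfac,
      fdMatrix_ne_zero_iff_of_lt hε hcr, fdCholeskyPattern_iff_of_lt hm hcr]
    refine or_congr_right ⟨fun ⟨k, hkc, hrk, hck⟩ => ?_, fun ⟨k, hkc, hrk, hck⟩ => ?_⟩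
    · exact ⟨k, hkc, (ih k hkc (hkc.trans hcr)).1 hrk, (ih k hkc hkc).1 hck⟩
    · have hkc' : (⟨k, hkc.trans c.isLt⟩ : Fin (m ^ 2)) < c := hkc
      exact ⟨_, hkc', (ih _ hkc' (hkc'.trans hcr)).2 hrk, (ih _ hkc' hkc').2 hck⟩

end FiniteDifference

theorem stmt_1_general (m : ℕ) (ε b₀ : ℝ) (hε : 0 < ε)
    (L : Matrix (Fin (m ^ 2)) (Fin (m ^ 2)) ℝ)
    (hL_tri : ∀ i j : Fin (m ^ 2), i < j → L i j = 0)
    (hL_diag : ∀ i : Fin (m ^ 2), 0 < L i i)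
    (hL_fac : fdMatrix m ε b₀ = L * L.transpose) :
    {p : Fin (m ^ 2) × Fin (m ^ 2) | p.2 ≤ p.1 ∧ L p.1 p.2 ≠ 0}.ncard
      = m ^ 3 + m - 1 := by
  rw [← ncard_fdCholeskyPattern]
  congr 1
  ext ⟨r, c⟩
  change c ≤ r ∧ L r c ≠ 0 ↔ fdCholeskyPattern m r c
  rcases lt_trichotomy c r with hcr | rfl | hrc
  · rw [fdMatrix_cholesky_ne_zero_iff hε.ne' hL_tri hL_diag hL_fac hcr]
    exact and_iff_right hcr.le
  · exact iff_of_true ⟨le_rfl, (hL_diag c).ne'⟩ (by unfold fdCholeskyPattern; omega)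
  · exact iff_of_false (fun h => hrc.not_ge h.1) (fun h => hrc.not_ge h.1)

theorem stmt_1 (m : ℕ) (hm : 2 ≤ m) (ε b₀ : ℝ) (hε : 0 < ε) (hb₀ : 0 < b₀)
    (L : Matrix (Fin (m ^ 2)) (Fin (m ^ 2)) ℝ)
    (hL_tri : ∀ i j : Fin (m ^ 2), i < j → L i j = 0)
    (hL_diag : ∀ i : Fin (m ^ 2), 0 < L i i)
    (hL_fac : fdMatrix m ε b₀ = L * L.transpose) :
    {p : Fin (m ^ 2) × Fin (m ^ 2) | p.2 ≤ p.1 ∧ L p.1 p.2 ≠ 0}.ncard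
      = m ^ 3 + m - 1 :=
  stmt_1_general m ε b₀ hε L hL_tri hL_diag hL_fac
end

section
/- Fix an integer m ≥ 2, set N = m+1 and h = 1/N, and let ε > 0 and b₀ > 0 be reals. Let A be the m² × m² symmetric positive definite matrix defined by A(r,r) = 4ε² + h²b₀ for all r, A(r,c) = −ε² if |r−c| = m or if (|r−c| = 1 and ⌈r/m⌉ = ⌈c/m⌉), and A(r,c) = 0 otherwise, and let L be its Cholesky factor. Then for all 1 ≤ c ≤ r ≤ m², L(r,c) ≠ 0 if and only if either (r ≤ m and c ∈ {r−1, r}) or (r ≥ m+1 and r − m ≤ c ≤ r). In particular, every row from row m+1 onward has exactly m+1 nonzero entries, and all fill-in (nonzero entries of L at positions where A is zero) occurs in rows r ≥ m+1. -/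
namespace Matrix

variable {ι R : Type*} [Fintype ι] [LinearOrder ι] [LocallyFiniteOrderBot ι]

theorem mul_transpose_apply_of_lowerTriangular_s2 [CommSemiring R] {L : Matrix ι ι R}
    (hL : ∀ i j, i < j → L i j = 0) (r c : ι) :
    (L * Lᵀ) r c = L r c * L c c + ∑ k ∈ Finset.Iio c, L r k * L c k := by
  have hIic : ∑ k ∈ Finset.Iic c, L r k * L c k = ∑ k, L r k * L c k :=
    Finset.sum_subset (Finset.subset_univ _) fun k _ hk => by
      rw [hL c k (by simpa using hk), mul_zero]
  simp only [mul_apply, transpose_apply]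
  rw [← hIic, ← Finset.Iio_insert, Finset.sum_insert Finset.notMem_Iio_self]

variable [CommRing R] [LinearOrder R] [IsStrictOrderedRing R] {L : Matrix ι ι R}

theorem lowerTriangular_apply_nonpos_of_mul_transpose_offDiag_nonpos
    (hL : ∀ i j, i < j → L i j = 0) (hdiag : ∀ i, 0 < L i i)
    (hA : ∀ i j, i ≠ j → (L * Lᵀ) i j ≤ 0) {r c : ι} (hcr : c < r) : L r c ≤ 0 := by
  induction c using WellFoundedLT.induction generalizing r with
  | ind c ih =>
    have hS : 0 ≤ ∑ k ∈ Finset.Iio c, L r k * L c k :=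
      Finset.sum_nonneg fun k hk => by
        have hkc : k < c := Finset.mem_Iio.mp hk
        exact mul_nonneg_of_nonpos_of_nonpos (ih k hkc (hkc.trans hcr)) (ih k hkc hkc)
    have h := mul_transpose_apply_of_lowerTriangular_s2 hL r c
    have hrc := hA r c hcr.ne'
    exact nonpos_of_mul_nonpos_left (by linarith) (hdiag c)

theorem lowerTriangular_apply_ne_zero_iff
    (hL : ∀ i j, i < j → L i j = 0) (hdiag : ∀ i, 0 < L i i)
    (hA : ∀ i j, i ≠ j → (L * Lᵀ) i j ≤ 0) {r c : ι} (hcr : c < r) :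
    L r c ≠ 0 ↔ (L * Lᵀ) r c ≠ 0 ∨ ∃ k < c, L r k ≠ 0 ∧ L c k ≠ 0 := by
  have hnonpos {i j : ι} (hji : j < i) : L i j ≤ 0 :=
    lowerTriangular_apply_nonpos_of_mul_transpose_offDiag_nonpos hL hdiag hA hji
  have hterm : ∀ k ∈ Finset.Iio c, 0 ≤ L r k * L c k := fun k hk => by
    have hkc : k < c := Finset.mem_Iio.mp hk
    exact mul_nonneg_of_nonpos_of_nonpos (hnonpos (hkc.trans hcr)) (hnonpos hkc)
  have hS := Finset.sum_nonneg hterm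
  have hrec := mul_transpose_apply_of_lowerTriangular_s2 hL r c
  have hArc := hA r c hcr.ne'
  have hzero : L r c = 0 ↔ (L * Lᵀ) r c = 0 ∧ ∀ k ∈ Finset.Iio c, L r k * L c k = 0 := by
    rw [← Finset.sum_eq_zero_iff_of_nonneg hterm]
    constructor
    · intro h
      rw [h, zero_mul, zero_add] at hrec
      constructor <;> linarith
    · rintro ⟨hA0, hS0⟩
      rw [hA0, hS0, add_zero] at hrec
      exact (mul_eq_zero.mp hrec.symm).resolve_right (hdiag c).ne'
  simp only [ne_eq, hzero, not_and_or, not_forall, Finset.mem_Iio, mul_eq_zero, not_or, exists_prop]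

end Matrix

def gridLowerNeighbor (m r c : ℕ) : Prop :=
  c + m = r ∨ (c + 1 = r ∧ r / m = c / m)

def choleskyPattern (m r c : ℕ) : Prop :=
  c + 1 = r ∨ (m ≤ r ∧ r ≤ c + m)

theorem choleskyPattern_of_gridLowerNeighbor {m r c : ℕ} (h : gridLowerNeighbor m r c) :
    choleskyPattern m r c := by
  unfold gridLowerNeighbor choleskyPattern at *
  omega

theorem choleskyPattern.bounds_of_not_gridLowerNeighbor {m r c : ℕ} (hcr : c < r)
    (hP : choleskyPattern m r c) (hN : ¬ gridLowerNeighbor m r c) : m ≤ r ∧ r < c + m := by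
  unfold gridLowerNeighbor choleskyPattern at *
  have hcm : c + m ≠ r := fun h => hN (Or.inl h)
  rcases hP with hrc | hband
  · -- `r` starts a new grid row, so `m ∣ r`
    have hdiv : r / m ≠ c / m := fun h => hN (Or.inr ⟨hrc, h⟩)
    have hdvd : m ∣ r := by
      by_contra hndvd
      apply hdiv
      rw [← hrc, Nat.succ_div, if_neg (by rwa [hrc]), add_zero]
    have := Nat.le_of_dvd (Nat.zero_lt_of_lt hcr) hdvd
    have := Nat.pos_of_dvd_of_pos hdvd (Nat.zero_lt_of_lt hcr)
    omega
  · omega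

theorem choleskyPattern_iff {m r c : ℕ} (hcr : c < r) :
    choleskyPattern m r c ↔
      gridLowerNeighbor m r c ∨ ∃ k < c, choleskyPattern m r k ∧ choleskyPattern m c k := by
  constructor
  · intro hP
    by_cases hN : gridLowerNeighbor m r c
    · exact Or.inl hN
    · obtain ⟨hmr, hrc⟩ := hP.bounds_of_not_gridLowerNeighbor hcr hN
      refine Or.inr ⟨c - 1, by omega, ?_, ?_⟩ <;> unfold choleskyPattern <;> omega
  · rintro (hN | ⟨k, hkc, hrk | hrk, -⟩)
    · exact choleskyPattern_of_gridLowerNeighbor hN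
    · omega
    · exact Or.inr (by omega)

theorem fdMatrix_apply_nonpos {m : ℕ} {ε b₀ : ℝ} {r c : Fin (m ^ 2)} (hrc : r ≠ c) :
    fdMatrix m ε b₀ r c ≤ 0 := by
  have := sq_nonneg ε
  unfold fdMatrix
  rw [if_neg hrc]
  split_ifs <;> linarith

theorem fdMatrix_apply_ne_zero_iff {m : ℕ} {ε b₀ : ℝ} (hε : ε ≠ 0) {r c : Fin (m ^ 2)}
    (hcr : c < r) : fdMatrix m ε b₀ r c ≠ 0 ↔ gridLowerNeighbor m r c := by
  have hcr' : (c : ℕ) < r := hcr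
  have hε2 : -ε ^ 2 ≠ 0 := neg_ne_zero.mpr (pow_ne_zero 2 hε)
  unfold fdMatrix gridLowerNeighbor
  rw [if_neg hcr.ne']
  split_ifs <;>
    simp only [ne_eq, hε2, not_false_eq_true, not_true_eq_false, true_iff, false_iff] <;> omega

open scoped Matrix

section FdCholesky

variable {m : ℕ} {ε b₀ : ℝ} {L : Matrix (Fin (m ^ 2)) (Fin (m ^ 2)) ℝ}

theorem cholesky_fdMatrix_ne_zero_iff (hε : ε ≠ 0) (hL_tri : ∀ i j, i < j → L i j = 0)
    (hL_diag : ∀ i, 0 < L i i) (hL_fac : fdMatrix m ε b₀ = L * Lᵀ) {r c : Fin (m ^ 2)}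
    (hcr : c < r) : L r c ≠ 0 ↔ choleskyPattern m r c := by
  have hA : ∀ i j, i ≠ j → (L * Lᵀ) i j ≤ 0 := fun i j hij =>
    hL_fac ▸ fdMatrix_apply_nonpos hij
  induction c using WellFoundedLT.induction generalizing r with
  | ind c ih =>
    rw [Matrix.lowerTriangular_apply_ne_zero_iff hL_tri hL_diag hA hcr, ← hL_fac,
      fdMatrix_apply_ne_zero_iff hε hcr, choleskyPattern_iff hcr]
    refine or_congr_right ⟨?_, ?_⟩
    · rintro ⟨k, hkc, hrk, hck⟩
      exact ⟨k, hkc, (ih k hkc (hkc.trans hcr)).mp hrk, (ih k hkc hkc).mp hck⟩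
    · rintro ⟨k, hkc, hrk, hck⟩
      have hkc' : (⟨k, hkc.trans c.isLt⟩ : Fin (m ^ 2)) < c := hkc
      exact ⟨_, hkc', (ih _ hkc' (hkc'.trans hcr)).mpr hrk, (ih _ hkc' hkc').mpr hck⟩

theorem cholesky_fdMatrix_ne_zero_iff_of_le (hε : ε ≠ 0) (hL_tri : ∀ i j, i < j → L i j = 0)
    (hL_diag : ∀ i, 0 < L i i) (hL_fac : fdMatrix m ε b₀ = L * Lᵀ) {r c : Fin (m ^ 2)}
    (hcr : c ≤ r) :
    L r c ≠ 0 ↔ (r : ℕ) - m ≤ c ∧ ((r : ℕ) ≤ c + 1 ∨ m ≤ r) := by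
  have hm : 0 < m := (pow_pos_iff two_ne_zero).mp r.pos
  rcases hcr.lt_or_eq with hcr | rfl
  · rw [cholesky_fdMatrix_ne_zero_iff hε hL_tri hL_diag hL_fac hcr]
    unfold choleskyPattern
    have : (c : ℕ) < r := hcr
    omega
  · simp only [ne_eq, (hL_diag c).ne', not_false_eq_true, true_iff]
    omega

end FdCholesky

theorem stmt_2_general (m : ℕ) (ε b₀ : ℝ) (hε : 0 < ε)
    (L : Matrix (Fin (m ^ 2)) (Fin (m ^ 2)) ℝ)
    (hL_tri : ∀ i j : Fin (m ^ 2), i < j → L i j = 0)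
    (hL_diag : ∀ i : Fin (m ^ 2), 0 < L i i)
    (hL_fac : fdMatrix m ε b₀ = L * L.transpose) :
    (∀ r c : Fin (m ^ 2), c ≤ r →
      (L r c ≠ 0 ↔
        ((r : ℕ) + 1 ≤ m ∧ ((c : ℕ) + 1 + 1 = (r : ℕ) + 1 ∨ (c : ℕ) + 1 = (r : ℕ) + 1)) ∨
        (m + 1 ≤ (r : ℕ) + 1 ∧ (r : ℕ) + 1 - m ≤ (c : ℕ) + 1 ∧ (c : ℕ) + 1 ≤ (r : ℕ) + 1))) ∧
    (∀ r : Fin (m ^ 2), m + 1 ≤ (r : ℕ) + 1 →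
      {c : Fin (m ^ 2) | L r c ≠ 0}.ncard = m + 1) ∧
    (∀ r c : Fin (m ^ 2), c < r → fdMatrix m ε b₀ r c = 0 → L r c ≠ 0 →
      m + 1 ≤ (r : ℕ) + 1) := by
  have hrow {r c : Fin (m ^ 2)} (hcr : c ≤ r) :=
    cholesky_fdMatrix_ne_zero_iff_of_le hε.ne' hL_tri hL_diag hL_fac hcr
  refine ⟨fun r c hcr => (hrow hcr).trans (by omega), fun r hr => ?_, fun r c hcr hA hL => ?_⟩
  · have hset : {c : Fin (m ^ 2) | L r c ≠ 0} =
        Set.Icc ⟨r - m, (Nat.sub_le _ _).trans_lt r.isLt⟩ r := by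
      ext c
      simp only [Set.mem_ofPred_eq, Set.mem_Icc, Fin.le_def]
      by_cases hcr : c ≤ r
      · rw [hrow hcr]
        omega
      · simp only [hL_tri r c (not_le.mp hcr), ne_eq, not_true_eq_false, false_iff]
        omega
    rw [hset, ← Finset.coe_Icc, Set.ncard_coe_finset, Fin.card_Icc]
    change (r : ℕ) + 1 - (r - m) = m + 1
    omega
  · have hN : ¬ gridLowerNeighbor m r c := fun hN =>
      (fdMatrix_apply_ne_zero_iff hε.ne' hcr).mpr hN hA
    have := ((cholesky_fdMatrix_ne_zero_iff hε.ne' hL_tri hL_diag hL_fac hcr).mp hL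
      ).bounds_of_not_gridLowerNeighbor hcr hN
    omega

theorem stmt_2 (m : ℕ) (hm : 2 ≤ m) (ε b₀ : ℝ) (hε : 0 < ε) (hb₀ : 0 < b₀)
    (L : Matrix (Fin (m ^ 2)) (Fin (m ^ 2)) ℝ)
    (hL_tri : ∀ i j : Fin (m ^ 2), i < j → L i j = 0)
    (hL_diag : ∀ i : Fin (m ^ 2), 0 < L i i)
    (hL_fac : fdMatrix m ε b₀ = L * L.transpose) :
    (∀ r c : Fin (m ^ 2), c ≤ r →
      (L r c ≠ 0 ↔
        ((r : ℕ) + 1 ≤ m ∧ ((c : ℕ) + 1 + 1 = (r : ℕ) + 1 ∨ (c : ℕ) + 1 = (r : ℕ) + 1)) ∨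
        (m + 1 ≤ (r : ℕ) + 1 ∧ (r : ℕ) + 1 - m ≤ (c : ℕ) + 1 ∧ (c : ℕ) + 1 ≤ (r : ℕ) + 1))) ∧
    (∀ r : Fin (m ^ 2), m + 1 ≤ (r : ℕ) + 1 →
      {c : Fin (m ^ 2) | L r c ≠ 0}.ncard = m + 1) ∧
    (∀ r c : Fin (m ^ 2), c < r → fdMatrix m ε b₀ r c = 0 → L r c ≠ 0 →
      m + 1 ≤ (r : ℕ) + 1) :=
  stmt_2_general m ε b₀ hε L hL_tri hL_diag hL_fac
end

section
/- For every integer k ≥ 1 and every real b₀ > 0 there exist constants C₀, C₁ > 0 (depending only on k and b₀, and in particular independent of N and ε) such that for every integer m ≥ k + 2 and every real ε with 0 < ε ≤ h, where N = m+1 and h = 1/N, the Cholesky factor L of the matrix A satisfies C₀ · ε^{2(k+1)} / h^{2k+1} ≤ |L(m+1, k+1)| ≤ C₁ · ε^{2(k+1)} / h^{2k+1}. (These are the fill-in entries of 'level k' in row m+1: their magnitude is Θ(δ^{2(k+1)} h) with δ = ε/h.) -/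
open Finset Matrix

section Cholesky

variable {n : ℕ} {L : Matrix (Fin n) (Fin n) ℝ}

theorem mul_transpose_apply_of_forall_lt_eq_zero (hL : ∀ i j : Fin n, i < j → L i j = 0)
    {i j : Fin n} (hi : ∀ p < j, L i p = 0) : (L * Lᵀ) i j = L i j * L j j := by
  rw [mul_apply]
  refine sum_eq_single j (fun p _ hpj => ?_) (fun h => absurd (mem_univ j) h)
  rcases lt_or_gt_of_ne hpj with hp | hp
  · rw [hi p hp, zero_mul]
  · rw [transpose_apply, hL j p hp, mul_zero]

theorem mul_transpose_apply_of_bidiagonal_row (hL : ∀ i j : Fin n, i < j → L i j = 0)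
    {i j j' : Fin n} (hj' : (j' : ℕ) + 1 = j) (hj : ∀ p : Fin n, (p : ℕ) + 1 < j → L j p = 0) :
    (L * Lᵀ) i j = L i j' * L j j' + L i j * L j j := by
  have hne : j' ≠ j := fun h => by rw [h] at hj'; omega
  rw [mul_apply, ← sum_subset (subset_univ {j', j}), sum_pair hne]
  · rfl
  intro p _ hp
  simp only [mem_insert, mem_singleton, not_or, ← Fin.val_ne_iff] at hp
  rcases lt_or_gt_of_ne hp.2 with hlt | hgt
  · rw [transpose_apply, hj p (by omega), mul_zero]
  · rw [transpose_apply, hL j p hgt, mul_zero]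

theorem cholesky_eq_zero_of_mul_transpose_eq_zero (hL : ∀ i j : Fin n, i < j → L i j = 0)
    (hdiag : ∀ i, 0 < L i i) {i : Fin n} {r : ℕ}
    (hA : ∀ q : Fin n, (q : ℕ) < r → (L * Lᵀ) i q = 0) :
    ∀ q : Fin n, (q : ℕ) < r → L i q = 0 := by
  intro q
  induction q using WellFoundedLT.induction with
  | ind q ih =>
    intro hq
    have h := hA q hq
    rw [mul_transpose_apply_of_forall_lt_eq_zero hL fun p hp => ih p hp (by omega)] at h
    exact (mul_eq_zero.mp h).resolve_right (hdiag q).ne'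

/-- The leading `r × r` block of `A` is `tridiag(-b, a, -b)`; only its lower triangle is recorded,
the matrices of interest being symmetric. -/
structure IsLowerTridiagonalBlock (A : Matrix (Fin n) (Fin n) ℝ) (r : ℕ) (a b : ℝ) : Prop where
  diag : ∀ i : Fin n, (i : ℕ) < r → A i i = a
  sub : ∀ i j : Fin n, (i : ℕ) < r → (j : ℕ) + 1 = i → A i j = -b
  band : ∀ i j : Fin n, (i : ℕ) < r → (j : ℕ) + 1 < i → A i j = 0

section TridiagonalBlock

variable {r : ℕ} {a b : ℝ}

theorem IsLowerTridiagonalBlock.cholesky_eq_zero (hL : ∀ i j : Fin n, i < j → L i j = 0)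
    (hdiag : ∀ i, 0 < L i i) (hA : IsLowerTridiagonalBlock (L * Lᵀ) r a b) {i j : Fin n}
    (hi : (i : ℕ) < r) (hj : (j : ℕ) + 1 < i) : L i j = 0 :=
  cholesky_eq_zero_of_mul_transpose_eq_zero hL hdiag (r := i - 1)
    (fun q hq => hA.band i q hi (by omega)) j (by omega)

theorem IsLowerTridiagonalBlock.cholesky_sub_mul_diag (hL : ∀ i j : Fin n, i < j → L i j = 0)
    (hdiag : ∀ i, 0 < L i i) (hA : IsLowerTridiagonalBlock (L * Lᵀ) r a b) {i j : Fin n}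
    (hi : (i : ℕ) < r) (hj : (j : ℕ) + 1 = i) : L i j * L j j = -b := by
  rw [← hA.sub i j hi hj, mul_transpose_apply_of_forall_lt_eq_zero hL fun p hp =>
    hA.cholesky_eq_zero hL hdiag hi (by rw [← hj]; exact Nat.succ_lt_succ hp)]

theorem IsLowerTridiagonalBlock.cholesky_sub_sq_add_diag_sq
    (hL : ∀ i j : Fin n, i < j → L i j = 0) (hdiag : ∀ i, 0 < L i i)
    (hA : IsLowerTridiagonalBlock (L * Lᵀ) r a b) {i j : Fin n}
    (hi : (i : ℕ) < r) (hj : (j : ℕ) + 1 = i) : L i j ^ 2 + L i i ^ 2 = a := by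
  rw [← hA.diag i hi, mul_transpose_apply_of_bidiagonal_row hL hj
    fun p hp => hA.cholesky_eq_zero hL hdiag hi hp, sq, sq]

theorem IsLowerTridiagonalBlock.cholesky_diag_sq_of_val_eq_zero
    (hL : ∀ i j : Fin n, i < j → L i j = 0) (hA : IsLowerTridiagonalBlock (L * Lᵀ) r a b)
    {i : Fin n} (hi : (i : ℕ) < r) (hi0 : (i : ℕ) = 0) : L i i ^ 2 = a := by
  rw [← hA.diag i hi, mul_transpose_apply_of_forall_lt_eq_zero hL fun p hp => by omega, sq]

theorem IsLowerTridiagonalBlock.cholesky_diag_sq_mem_Icc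
    (hL : ∀ i j : Fin n, i < j → L i j = 0) (hdiag : ∀ i, 0 < L i i)
    (hA : IsLowerTridiagonalBlock (L * Lᵀ) r a b) (hb : 0 ≤ b) (hab : 2 * b ≤ a) :
    ∀ i : Fin n, (i : ℕ) < r → L i i ^ 2 ∈ Set.Icc (a / 2) a := by
  rintro ⟨i, hin⟩ hi
  induction i with
  | zero =>
    rw [hA.cholesky_diag_sq_of_val_eq_zero hL hi rfl]
    constructor <;> linarith
  | succ i ih =>
    set j : Fin n := ⟨i, by omega⟩
    obtain ⟨hj_lo, -⟩ := ih j.isLt (Nat.lt_of_succ_lt hi)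
    have hsub := hA.cholesky_sub_mul_diag hL hdiag hi (j := j) rfl
    have hsq := hA.cholesky_sub_sq_add_diag_sq hL hdiag hi (j := j) rfl
    have hsub_sq : L ⟨i + 1, hin⟩ j ^ 2 * L j j ^ 2 = b ^ 2 := by
      rw [← mul_pow, hsub, neg_sq]
    -- `L(i+1,i)² = b² / L(i,i)² ≤ b² / (a/2) ≤ a/2` by diagonal dominance `2b ≤ a`
    have hsub_le : L ⟨i + 1, hin⟩ j ^ 2 ≤ a / 2 := by
      by_contra! h
      have hjj : 0 < L j j ^ 2 := pow_pos (hdiag j) 2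
      nlinarith [mul_lt_mul_of_pos_right h hjj,
        mul_le_mul_of_nonneg_left hj_lo (by linarith : 0 ≤ a / 2)]
    constructor <;> nlinarith [sq_nonneg (L ⟨i + 1, hin⟩ j)]

theorem IsLowerTridiagonalBlock.cholesky_diag_mem_Icc
    (hL : ∀ i j : Fin n, i < j → L i j = 0) (hdiag : ∀ i, 0 < L i i)
    (hA : IsLowerTridiagonalBlock (L * Lᵀ) r a b) (hb : 0 ≤ b) (hab : 2 * b ≤ a)
    {i : Fin n} (hi : (i : ℕ) < r) : L i i ∈ Set.Icc √(a / 2) √a := by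
  obtain ⟨hlo, hhi⟩ := hA.cholesky_diag_sq_mem_Icc hL hdiag hb hab i hi
  exact ⟨(Real.sqrt_le_left (hdiag i).le).2 hlo, Real.le_sqrt_of_sq_le hhi⟩

theorem IsLowerTridiagonalBlock.cholesky_fill_in_step
    (hL : ∀ i j : Fin n, i < j → L i j = 0) (hdiag : ∀ i, 0 < L i i)
    (hA : IsLowerTridiagonalBlock (L * Lᵀ) r a b) (hb : 0 ≤ b) {i p q : Fin n}
    (hq : (q : ℕ) < r) (hpq : (p : ℕ) + 1 = q) (hrow : (L * Lᵀ) i q = 0) :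
    |L i q| * L q q * L p p = b * |L i p| := by
  rw [mul_transpose_apply_of_bidiagonal_row hL hpq
    fun p hp => hA.cholesky_eq_zero hL hdiag hq hp] at hrow
  have hsub := hA.cholesky_sub_mul_diag hL hdiag hq hpq
  have hrec : L i q * L q q * L p p = b * L i p := by
    linear_combination L p p * hrow - L i p * hsub
  rw [← abs_of_pos (hdiag q), ← abs_of_pos (hdiag p), ← abs_mul, ← abs_mul, hrec, abs_mul,
    abs_of_nonneg hb]

theorem IsLowerTridiagonalBlock.cholesky_fill_in_bounds
    (hL : ∀ i j : Fin n, i < j → L i j = 0) (hdiag : ∀ i, 0 < L i i)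
    (hA : IsLowerTridiagonalBlock (L * Lᵀ) r a b) (hb : 0 ≤ b) (hab : 2 * b ≤ a) {i : Fin n} :
    ∀ p : Fin n, (p : ℕ) < r →
      (∀ q : Fin n, q ≤ p → (L * Lᵀ) i q = if (q : ℕ) = 0 then -b else 0) →
      b ^ ((p : ℕ) + 1) ≤ |L i p| * √a ^ (2 * (p : ℕ) + 1) ∧
        |L i p| * √(a / 2) ^ (2 * (p : ℕ) + 1) ≤ b ^ ((p : ℕ) + 1) := by
  rintro ⟨p, hpn⟩ hp hrow
  induction p with
  | zero =>
    have h0 := hrow ⟨0, hpn⟩ le_rfl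
    rw [if_pos rfl, mul_transpose_apply_of_forall_lt_eq_zero hL fun q hq => absurd hq
      (Nat.not_lt_zero _)] at h0
    obtain ⟨hlo, hhi⟩ := hA.cholesky_diag_mem_Icc hL hdiag hb hab hp
    have habs : |L i ⟨0, hpn⟩| * L ⟨0, hpn⟩ ⟨0, hpn⟩ = b := by
      rw [← abs_of_pos (hdiag _), ← abs_mul, h0, abs_neg, abs_of_nonneg hb]
    simp only [zero_add, mul_zero, pow_one]
    constructor
    · rw [← habs]; gcongr
    · rw [← habs]; gcongr
  | succ p ih =>
    have hp' : p < r := Nat.lt_of_succ_lt hp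
    set P : Fin n := ⟨p, by omega⟩
    set Q : Fin n := ⟨p + 1, hpn⟩
    obtain ⟨ih_lo, ih_hi⟩ := ih P.isLt hp'
      fun q hq => hrow q (hq.trans (Fin.mk_le_mk.2 p.le_succ))
    have hstep : |L i Q| * L Q Q * L P P = b * |L i P| :=
      hA.cholesky_fill_in_step hL hdiag hb hp rfl
        (by rw [hrow Q le_rfl, if_neg p.succ_ne_zero])
    obtain ⟨hQ_lo, hQ_hi⟩ := hA.cholesky_diag_mem_Icc hL hdiag hb hab hp
    obtain ⟨hP_lo, hP_hi⟩ := hA.cholesky_diag_mem_Icc hL hdiag hb hab (i := P) hp'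
    have hP := (hdiag P).le
    have hQ := mul_nonneg (abs_nonneg (L i Q)) (hdiag Q).le
    constructor
    · calc b ^ (p + 1 + 1) = b * b ^ (p + 1) := by ring
        _ ≤ b * (|L i P| * √a ^ (2 * p + 1)) := by gcongr
        _ = |L i Q| * L Q Q * L P P * √a ^ (2 * p + 1) := by rw [hstep]; ring
        _ ≤ |L i Q| * √a * √a * √a ^ (2 * p + 1) := by gcongr
        _ = |L i Q| * √a ^ (2 * (p + 1) + 1) := by ring
    · calc |L i Q| * √(a / 2) ^ (2 * (p + 1) + 1)
            = |L i Q| * √(a / 2) * √(a / 2) * √(a / 2) ^ (2 * p + 1) := by ring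
        _ ≤ |L i Q| * L Q Q * L P P * √(a / 2) ^ (2 * p + 1) := by gcongr
        _ = b * (|L i P| * √(a / 2) ^ (2 * p + 1)) := by rw [hstep]; ring
        _ ≤ b * b ^ (p + 1) := by gcongr
        _ = b ^ (p + 1 + 1) := by ring

end TridiagonalBlock

end Cholesky

section FdMatrix

variable {m : ℕ} {ε b₀ : ℝ}

theorem fdMatrix_isLowerTridiagonalBlock :
    IsLowerTridiagonalBlock (fdMatrix m ε b₀) m (4 * ε ^ 2 + (1 / (m + 1) : ℝ) ^ 2 * b₀)
      (ε ^ 2) where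
  diag _ _ := if_pos rfl
  sub i j hi hj := by
    have hblock : (i : ℕ) / m = (j : ℕ) / m := by
      rw [Nat.div_eq_of_lt hi, Nat.div_eq_of_lt (by omega)]
    rw [fdMatrix, if_neg (by omega), if_neg (by omega), if_pos ⟨Or.inr hj, hblock⟩]
  band i j hi hj := by
    rw [fdMatrix, if_neg (by omega), if_neg (by omega), if_neg (by omega)]

theorem fdMatrix_apply_of_val_eq {i q : Fin (m ^ 2)} (hi : (i : ℕ) = m) (hq : (q : ℕ) < m) :
    fdMatrix m ε b₀ i q = if (q : ℕ) = 0 then -ε ^ 2 else 0 := by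
  have hblock : (q : ℕ) / m ≠ (i : ℕ) / m := by
    rw [Nat.div_eq_of_lt hq, hi, Nat.div_self (by omega)]
    exact zero_ne_one
  split_ifs with hq0
  · rw [fdMatrix, if_neg (by omega), if_pos (Or.inr (by omega))]
  · rw [fdMatrix, if_neg (by omega), if_neg (by omega), if_neg fun h => hblock h.2.symm]

end FdMatrix

theorem stmt_4 (k : ℕ) (b₀ : ℝ) (hb₀ : 0 < b₀) :
    ∃ C₀ C₁ : ℝ, 0 < C₀ ∧ 0 < C₁ ∧
      ∀ m : ℕ, ∀ hm : k + 2 ≤ m,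
      ∀ ε : ℝ, 0 < ε → ε ≤ 1 / (m + 1 : ℝ) →
      ∀ L : Matrix (Fin (m ^ 2)) (Fin (m ^ 2)) ℝ,
        (∀ i j : Fin (m ^ 2), i < j → L i j = 0) →
        (∀ i : Fin (m ^ 2), 0 < L i i) →
        fdMatrix m ε b₀ = L * L.transpose →
        C₀ * (ε ^ (2 * (k + 1)) / (1 / (m + 1 : ℝ)) ^ (2 * k + 1)) ≤
            |L ⟨m, by nlinarith⟩ ⟨k, by nlinarith⟩| ∧
          |L ⟨m, by nlinarith⟩ ⟨k, by nlinarith⟩| ≤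
            C₁ * (ε ^ (2 * (k + 1)) / (1 / (m + 1 : ℝ)) ^ (2 * k + 1)) := by
  refine ⟨(√(4 + b₀) ^ (2 * k + 1))⁻¹, (√(b₀ / 2) ^ (2 * k + 1))⁻¹, by positivity,
    by positivity, fun m hm ε hε hεh L hL hdiag hA => ?_⟩
  set h : ℝ := 1 / (m + 1 : ℝ)
  set a := 4 * ε ^ 2 + h ^ 2 * b₀
  have hεh2 : ε ^ 2 ≤ h ^ 2 := pow_le_pow_left₀ hε.le hεh 2
  have hblock : IsLowerTridiagonalBlock (L * Lᵀ) m a (ε ^ 2) :=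
    hA ▸ fdMatrix_isLowerTridiagonalBlock
  obtain ⟨hlo, hhi⟩ := hblock.cholesky_fill_in_bounds hL hdiag (sq_nonneg ε) (by nlinarith)
    (i := ⟨m, by nlinarith⟩) ⟨k, by nlinarith⟩ (by simp only; omega) fun q hq =>
      hA ▸ fdMatrix_apply_of_val_eq rfl (lt_of_le_of_lt hq (by simp only; omega))
  have hsqrt_hi : √a ≤ √(4 + b₀) * h :=
    (Real.sqrt_le_left (by positivity)).2
      (by rw [mul_pow, Real.sq_sqrt (by positivity)]; nlinarith)
  have hsqrt_lo : √(b₀ / 2) * h ≤ √(a / 2) :=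
    Real.le_sqrt_of_sq_le (by rw [mul_pow, Real.sq_sqrt (by positivity)]; nlinarith)
  rw [pow_mul]
  constructor
  · calc (√(4 + b₀) ^ (2 * k + 1))⁻¹ * ((ε ^ 2) ^ (k + 1) / h ^ (2 * k + 1))
        = (ε ^ 2) ^ (k + 1) / (√(4 + b₀) * h) ^ (2 * k + 1) := by rw [mul_pow]; ring
      _ ≤ (ε ^ 2) ^ (k + 1) / √a ^ (2 * k + 1) := by gcongr
      _ ≤ _ := by rw [div_le_iff₀ (by positivity)]; exact hlo
  · calc _ ≤ (ε ^ 2) ^ (k + 1) / √(a / 2) ^ (2 * k + 1) := by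
          rw [le_div_iff₀ (by positivity)]; exact hhi
      _ ≤ (ε ^ 2) ^ (k + 1) / (√(b₀ / 2) * h) ^ (2 * k + 1) := by gcongr
      _ = (√(b₀ / 2) ^ (2 * k + 1))⁻¹ * ((ε ^ 2) ^ (k + 1) / h ^ (2 * k + 1)) := by
          rw [mul_pow]; ring
end

section
/- Fix an integer m ≥ 3, set N = m+1 and h = 1/N, and let ε > 0 and b₀ > 0. Let L be the Cholesky factor of the matrix A. Then for every integer j with 2 ≤ j ≤ m−1, the fill-in entries in row m+1 satisfy the exact recurrence L(m+1, j+1) = − L(m+1, j) · L(j+1, j) / L(j+1, j+1). -/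
namespace Matrix

variable {ι R : Type*} [Fintype ι] [LinearOrder ι]

theorem apply_eq_zero_of_mul_transpose_apply_eq_zero [Ring R] [NoZeroDivisors R]
    {L : Matrix ι ι R} (hL_tri : ∀ i j, i < j → L i j = 0) (hL_diag : ∀ i, L i i ≠ 0)
    {i c : ι} (hA : ∀ k < c, (L * Lᵀ) i k = 0) : ∀ k < c, L i k = 0 := by
  intro k
  induction k using WellFoundedLT.induction with
  | _ k ih =>
    intro hkc
    have hexpand : (L * Lᵀ) i k = L i k * L k k := by
      rw [mul_apply]
      refine Fintype.sum_eq_single k fun l hlk => ?_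
      rcases hlk.lt_or_gt with hl | hl
      · rw [ih l hl (hl.trans hkc), zero_mul]
      · rw [transpose_apply, hL_tri k l hl, mul_zero]
    have hprod : L i k * L k k = 0 := by rw [← hexpand]; exact hA k hkc
    exact (mul_eq_zero.mp hprod).resolve_right (hL_diag k)

theorem mul_transpose_apply_eq_of_covBy [Semiring R] {L : Matrix ι ι R}
    (hL_tri : ∀ i j, i < j → L i j = 0) {i j p : ι} (hpj : p ⋖ j)
    (hrow : ∀ l < p, L j l = 0) : (L * Lᵀ) i j = L i p * L j p + L i j * L j j := by
  rw [mul_apply]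
  refine Fintype.sum_eq_add p j hpj.ne fun l ⟨hlp, hlj⟩ => ?_
  rw [transpose_apply]
  rcases hlp.lt_or_gt with hl | hl
  · rw [hrow l hl, mul_zero]
  · rcases hlj.lt_or_gt with hl' | hl'
    · exact absurd hl' (hpj.2 hl)
    · rw [hL_tri j l hl', mul_zero]

end Matrix

theorem fdMatrix_apply_eq_zero_of_add_two_le {m : ℕ} (ε b₀ : ℝ) {j k : Fin (m ^ 2)}
    (hjm : (j : ℕ) < m) (hkj : (k : ℕ) + 2 ≤ j) : fdMatrix m ε b₀ j k = 0 := by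
  have hjk : j ≠ k := fun h => by rw [h] at hkj; omega
  simp only [fdMatrix, if_neg hjk]
  rw [if_neg (by omega), if_neg (by omega)]

theorem fdMatrix_apply_eq_zero_of_eq_of_pos_of_lt {m : ℕ} (ε b₀ : ℝ) {i j : Fin (m ^ 2)}
    (hi : (i : ℕ) = m) (hj0 : 0 < (j : ℕ)) (hjm : (j : ℕ) < m) :
    fdMatrix m ε b₀ i j = 0 := by
  have hij : i ≠ j := fun h => by rw [h] at hi; omega
  have hblock : (i : ℕ) / m ≠ (j : ℕ) / m := by
    rw [hi, Nat.div_self (by omega), Nat.div_eq_of_lt hjm]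
    omega
  simp only [fdMatrix, if_neg hij]
  rw [if_neg (by omega), if_neg (by tauto)]

theorem stmt_7 (m : ℕ) (hm : 3 ≤ m) (ε b₀ : ℝ)
    (L : Matrix (Fin (m ^ 2)) (Fin (m ^ 2)) ℝ)
    (hL_tri : ∀ i j : Fin (m ^ 2), i < j → L i j = 0)
    (hL_diag : ∀ i : Fin (m ^ 2), 0 < L i i)
    (hL_fac : fdMatrix m ε b₀ = L * L.transpose) :
    ∀ j : ℕ, ∀ hj2 : 2 ≤ j, ∀ hjm : j ≤ m - 1,
      L ⟨m, by nlinarith⟩ ⟨j, by nlinarith [Nat.sub_le m 1]⟩ =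
        -L ⟨m, by nlinarith⟩ ⟨j - 1, by nlinarith [Nat.sub_le m 1, Nat.sub_le j 1]⟩
          * L ⟨j, by nlinarith [Nat.sub_le m 1]⟩
              ⟨j - 1, by nlinarith [Nat.sub_le m 1, Nat.sub_le j 1]⟩
          / L ⟨j, by nlinarith [Nat.sub_le m 1]⟩ ⟨j, by nlinarith [Nat.sub_le m 1]⟩ := by
  intro j hj2 hjm
  have hmsq : m < m ^ 2 := by nlinarith
  set M : Fin (m ^ 2) := ⟨m, by omega⟩
  set J : Fin (m ^ 2) := ⟨j, by omega⟩
  set P : Fin (m ^ 2) := ⟨j - 1, by omega⟩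
  have hL_diag_ne : ∀ i, L i i ≠ 0 := fun i => (hL_diag i).ne'
  have hcov : P ⋖ J :=
    Fin.covBy_iff.mpr (Nat.covBy_iff_add_one_eq.mpr (by simp only [P, J]; omega))
  have hrow : ∀ l < P, L J l = 0 :=
    Matrix.apply_eq_zero_of_mul_transpose_apply_eq_zero hL_tri hL_diag_ne fun k hk => by
      rw [← hL_fac]
      exact fdMatrix_apply_eq_zero_of_add_two_le ε b₀ (by simp only [J]; omega)
        (by simp only [Fin.lt_def, P, J] at hk ⊢; omega)
  have hA : fdMatrix m ε b₀ M J = 0 :=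
    fdMatrix_apply_eq_zero_of_eq_of_pos_of_lt ε b₀ rfl (by simp only [J]; omega)
      (by simp only [J]; omega)
  rw [hL_fac, Matrix.mul_transpose_apply_eq_of_covBy hL_tri hcov hrow] at hA
  rw [eq_div_iff (hL_diag_ne _)]
  linarith
end

section
/- Fix an integer m ≥ 2, set N = m+1 and h = 1/N, let b₀ > 0, and let ε satisfy 0 < ε ≤ h. Then every diagonal entry of the Cholesky factor L of the matrix A satisfies h·√b₀ ≤ L(r,r) ≤ h·√(4 + b₀) for all 1 ≤ r ≤ m²; in particular each diagonal entry of L is Θ(h), with constants independent of N and ε. -/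
open Matrix Finset

namespace Matrix

variable {n : Type*} [Fintype n]

theorem IsUpperTriangular.mul_apply_self [LinearOrder n] {R : Type*}
    [NonUnitalNonAssocSemiring R] {M N : Matrix n n R} (hM : M.IsUpperTriangular)
    (hN : N.IsUpperTriangular) (i : n) : (M * N) i i = M i i * N i i := by
  rw [mul_apply, sum_eq_single i]
  · intro j _ hji
    rcases hji.lt_or_gt with hj | hj
    · rw [hM hj, zero_mul]
    · rw [hN hj, mul_zero]
  · exact fun hi => absurd (mem_univ i) hi

theorem IsUpperTriangular.inv_apply_self_mul [LinearOrder n] {K : Type*} [Field K]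
    {U : Matrix n n K} (hU : U.IsUpperTriangular) (hdet : IsUnit U.det) (i : n) :
    U⁻¹ i i * U i i = 1 := by
  let := U.invertibleOfIsUnitDet hdet
  have hinv : U⁻¹.IsUpperTriangular := blockTriangular_inv_of_blockTriangular hU
  rw [← hinv.mul_apply_self hU, nonsing_inv_mul U hdet, one_apply_eq]

theorem IsLowerTriangular.le_sq_apply_self [LinearOrder n] {L : Matrix n n ℝ}
    (hL : L.IsLowerTriangular) (hdiag : ∀ i, L i i ≠ 0) {c : ℝ}
    (hc : ∀ x, c * (x ⬝ᵥ x) ≤ x ⬝ᵥ (L * Lᵀ) *ᵥ x) (r : n) : c ≤ L r r ^ 2 := by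
  have hU : Lᵀ.IsUpperTriangular := hL.transpose
  have hdet : IsUnit Lᵀ.det := by
    rw [det_of_isUpperTriangular hU]
    exact (prod_ne_zero_iff.2 fun i _ => hdiag i).isUnit
  set x := Lᵀ⁻¹ *ᵥ Pi.single r 1
  have hLx : Lᵀ *ᵥ x = Pi.single r 1 := by
    rw [mulVec_mulVec, mul_nonsing_inv _ hdet, one_mulVec]
  have hxr : x r * L r r = 1 := by
    simpa [x, mulVec_single_one] using hU.inv_apply_self_mul hdet r
  have hquad : x ⬝ᵥ (L * Lᵀ) *ᵥ x = 1 := by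
    rw [← mulVec_mulVec, dotProduct_mulVec, ← mulVec_transpose, hLx]
    simp
  have hxx : x r * x r ≤ x ⬝ᵥ x :=
    single_le_sum (f := fun i => x i * x i) (fun i _ => mul_self_nonneg _) (mem_univ r)
  rcases le_or_gt c 0 with hc0 | hc0
  · exact hc0.trans (sq_nonneg _)
  have hcx : c * (x r * x r) ≤ 1 :=
    hquad ▸ (mul_le_mul_of_nonneg_left hxx hc0.le).trans (hc x)
  calc c = c * (x r * L r r) ^ 2 := by rw [hxr]; ring
    _ = c * (x r * x r) * L r r ^ 2 := by ring
    _ ≤ L r r ^ 2 := mul_le_of_le_one_left (sq_nonneg _) hcx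

theorem sq_le_mul_transpose_apply_self (L : Matrix n n ℝ) (r : n) :
    L r r ^ 2 ≤ (L * Lᵀ) r r := by
  simpa only [mul_apply, transpose_apply, sq] using
    single_le_sum (f := fun j => L r j * L r j) (fun j _ => mul_self_nonneg _) (mem_univ r)

theorem neg_mul_dotProduct_self_le_dotProduct_mulVec {E : Matrix n n ℝ} (hE : E.IsSymm)
    {s : ℝ} (hs : ∀ i, ∑ j, |E i j| ≤ s) (x : n → ℝ) : -(s * (x ⬝ᵥ x)) ≤ x ⬝ᵥ E *ᵥ x := by
  have hentry : ∀ i j, -(|E i j| * (x i * x i + x j * x j) / 2) ≤ x i * (E i j * x j) := by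
    intro i j
    have hpos : 0 ≤ |E i j| + E i j := by linarith [neg_abs_le (E i j)]
    have hneg : 0 ≤ |E i j| - E i j := by linarith [le_abs_self (E i j)]
    nlinarith [mul_nonneg hpos (sq_nonneg (x i + x j)), mul_nonneg hneg (sq_nonneg (x i - x j))]
  have hswap : ∑ i, ∑ j, |E i j| * (x j * x j) = ∑ i, ∑ j, |E i j| * (x i * x i) := by
    rw [sum_comm]
    simp_rw [hE.apply]
  have hrow : ∑ i, ∑ j, |E i j| * (x i * x i) ≤ s * (x ⬝ᵥ x) := by
    rw [dotProduct, mul_sum]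
    gcongr with i
    rw [← sum_mul]
    exact mul_le_mul_of_nonneg_right (hs i) (mul_self_nonneg _)
  calc -(s * (x ⬝ᵥ x)) ≤ -∑ i, ∑ j, |E i j| * (x i * x i + x j * x j) / 2 := by
        simp only [mul_add, add_div, sum_add_distrib, ← sum_div, hswap]
        linarith
    _ ≤ ∑ i, ∑ j, x i * (E i j * x j) := by
        simp only [← sum_neg_distrib]
        gcongr with i _ j
        exact hentry i j
    _ = x ⬝ᵥ E *ᵥ x := by simp only [dotProduct, mulVec, mul_sum]

end Matrix

theorem fdMatrix_isSymm (m : ℕ) (ε b₀ : ℝ) : (fdMatrix m ε b₀).IsSymm := by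
  ext i j
  simp only [transpose_apply, fdMatrix]
  split_ifs <;> first | rfl | (exfalso; omega)

noncomputable def fdDiag (m : ℕ) (ε b₀ : ℝ) : ℝ := 4 * ε ^ 2 + (1 / (m + 1) : ℝ) ^ 2 * b₀

theorem fdMatrix_apply_self (m : ℕ) (ε b₀ : ℝ) (i : Fin (m ^ 2)) :
    fdMatrix m ε b₀ i i = fdDiag m ε b₀ := by
  simp [fdMatrix, fdDiag]

theorem abs_fdMatrix_sub_smul_one_apply_le (m : ℕ) (ε b₀ : ℝ) (i j : Fin (m ^ 2)) :
    |(fdMatrix m ε b₀ - fdDiag m ε b₀ • 1) i j| ≤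
      if (j : ℕ) ∈ ({(i : ℕ) + m, (i : ℕ) - m, (i : ℕ) + 1, (i : ℕ) - 1} : Finset ℕ)
      then ε ^ 2 else 0 := by
  simp only [Matrix.sub_apply, Matrix.smul_apply, one_apply, fdMatrix, fdDiag, mem_insert,
    mem_singleton]
  split_ifs <;> first | (exfalso; omega) | simp [sq_nonneg]

theorem sum_abs_fdMatrix_sub_smul_one_apply_le (m : ℕ) (ε b₀ : ℝ) (i : Fin (m ^ 2)) :
    ∑ j, |(fdMatrix m ε b₀ - fdDiag m ε b₀ • 1) i j| ≤ 4 * ε ^ 2 := by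
  set S : Finset ℕ := {(i : ℕ) + m, (i : ℕ) - m, (i : ℕ) + 1, (i : ℕ) - 1}
  calc ∑ j, |(fdMatrix m ε b₀ - fdDiag m ε b₀ • 1) i j|
      ≤ ∑ j : Fin (m ^ 2), if (j : ℕ) ∈ S then ε ^ 2 else 0 :=
        sum_le_sum fun j _ => abs_fdMatrix_sub_smul_one_apply_le m ε b₀ i j
    _ = ∑ k ∈ range (m ^ 2) ∩ S, ε ^ 2 := by
        rw [Fin.sum_univ_eq_sum_range (fun k => if k ∈ S then ε ^ 2 else 0), sum_ite_mem]
    _ ≤ ∑ k ∈ S, ε ^ 2 :=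
        sum_le_sum_of_subset_of_nonneg inter_subset_right fun _ _ _ => sq_nonneg ε
    _ ≤ 4 * ε ^ 2 := by
        rw [sum_const, nsmul_eq_mul]
        gcongr
        exact_mod_cast card_le_four

theorem mul_dotProduct_self_le_dotProduct_fdMatrix_mulVec (m : ℕ) (ε b₀ : ℝ)
    (x : Fin (m ^ 2) → ℝ) :
    (1 / (m + 1) : ℝ) ^ 2 * b₀ * (x ⬝ᵥ x) ≤ x ⬝ᵥ fdMatrix m ε b₀ *ᵥ x := by
  have hE := neg_mul_dotProduct_self_le_dotProduct_mulVec
    ((fdMatrix_isSymm m ε b₀).sub (isSymm_one.smul _))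
    (sum_abs_fdMatrix_sub_smul_one_apply_le m ε b₀) x
  rw [sub_mulVec, dotProduct_sub, smul_mulVec, one_mulVec, dotProduct_smul, smul_eq_mul,
    fdDiag] at hE
  linarith

theorem stmt_8_general (m : ℕ) (ε b₀ : ℝ) (hb₀ : 0 < b₀)
    (hε : 0 < ε) (hεh : ε ≤ 1 / (m + 1 : ℝ))
    (L : Matrix (Fin (m ^ 2)) (Fin (m ^ 2)) ℝ)
    (hL_tri : ∀ i j : Fin (m ^ 2), i < j → L i j = 0)
    (hL_diag : ∀ i : Fin (m ^ 2), 0 < L i i)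
    (hL_fac : fdMatrix m ε b₀ = L * L.transpose) :
    ∀ r : Fin (m ^ 2),
      (1 / (m + 1 : ℝ)) * Real.sqrt b₀ ≤ L r r ∧
      L r r ≤ (1 / (m + 1 : ℝ)) * Real.sqrt (4 + b₀) := by
  intro r
  set h : ℝ := 1 / (m + 1)
  have hL : L.IsLowerTriangular := fun i j hij => hL_tri i j hij
  have hlower : h ^ 2 * b₀ ≤ L r r ^ 2 :=
    hL.le_sq_apply_self (fun i => (hL_diag i).ne')
      (hL_fac ▸ mul_dotProduct_self_le_dotProduct_fdMatrix_mulVec m ε b₀) r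
  have hupper : L r r ^ 2 ≤ h ^ 2 * (4 + b₀) :=
    calc L r r ^ 2 ≤ (L * Lᵀ) r r := sq_le_mul_transpose_apply_self L r
      _ = 4 * ε ^ 2 + h ^ 2 * b₀ := by rw [← hL_fac, fdMatrix_apply_self, fdDiag]
      _ ≤ h ^ 2 * (4 + b₀) := by nlinarith [pow_le_pow_left₀ hε.le hεh 2]
  have hsq : ∀ c, 0 ≤ c → (h * √c) ^ 2 = h ^ 2 * c := fun c hc => by
    rw [mul_pow, Real.sq_sqrt hc]
  constructor
  · exact (pow_le_pow_iff_left₀ (by positivity) (hL_diag r).le two_ne_zero).1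
      (hsq b₀ hb₀.le ▸ hlower)
  · exact (pow_le_pow_iff_left₀ (hL_diag r).le (by positivity) two_ne_zero).1
      (hsq (4 + b₀) (by positivity) ▸ hupper)

theorem stmt_8 (m : ℕ) (hm : 2 ≤ m) (ε b₀ : ℝ) (hb₀ : 0 < b₀)
    (hε : 0 < ε) (hεh : ε ≤ 1 / (m + 1 : ℝ))
    (L : Matrix (Fin (m ^ 2)) (Fin (m ^ 2)) ℝ)
    (hL_tri : ∀ i j : Fin (m ^ 2), i < j → L i j = 0)
    (hL_diag : ∀ i : Fin (m ^ 2), 0 < L i i)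
    (hL_fac : fdMatrix m ε b₀ = L * L.transpose) :
    ∀ r : Fin (m ^ 2),
      (1 / (m + 1 : ℝ)) * Real.sqrt b₀ ≤ L r r ∧
      L r r ≤ (1 / (m + 1 : ℝ)) * Real.sqrt (4 + b₀) :=
  stmt_8_general m ε b₀ hb₀ hε hεh L hL_tri hL_diag hL_fac
end
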